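/- arXiv:0710.2137 — 7 statements merged into one kernel-verified Lean document; each statement's English description precedes it below -/
import Mathlib

section
/- Let 0 < t < s. For every function f : (ℕ → ℝ) → ℝ with MemLp f 2 γ_s^∞, the heat operator H_t f defined by (H_t f)(x) = ∫ f(x + y) dγ_t^∞(y) satisfies eLpNorm (H_t f) 2 γ_{s-t}^∞ ≤ eLpNorm f 2 γ_s^∞; that is, the heat operator is a contraction from L²(γ_s^∞) to L²(γ_{s-t}^∞). -/
/-!
Centred Gaussians add their variances under convolution, so `γ_{s-t}^∞ ∗ γ_t^∞` has the
finite-dimensional marginals of `γ_s^∞` and therefore equals it. For any probability measure `ν`,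
Jensen's inequality `‖∫ f (x + y) dν(y)‖ ^ p ≤ ∫ ‖f (x + y)‖ ^ p dν(y)`, integrated in `x`
against `μ`, shows that `f ↦ ∫ f (· + y) dν(y)` is a contraction from `L^p(μ ∗ ν)` to `L^p(μ)`.
-/

open MeasureTheory ProbabilityTheory
open scoped ENNReal NNReal

/-- `IsGaussianProductMeasure r μ` says that `μ` is the countable product probability measure
`⨂_{n ∈ ℕ} gaussianReal 0 r` on `ℕ → ℝ`, characterized by the property that all of its
finite-dimensional marginals are the corresponding finite products of centered Gaussians of
variance `r`. -/
def IsGaussianProductMeasure (r : ℝ) (μ : Measure (ℕ → ℝ)) : Prop :=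
  IsProbabilityMeasure μ ∧
    ∀ n : ℕ, μ.map (fun x (i : Fin n) => x (i : ℕ)) =
      Measure.pi (fun _ : Fin n => gaussianReal 0 r.toNNReal)

namespace MeasureTheory.Measure

variable {M N : Type*} [AddMonoid M] [AddMonoid N] [MeasurableSpace M] [MeasurableSpace N]
  [MeasurableAdd₂ M] [MeasurableAdd₂ N]

lemma map_conv (μ ν : Measure M) [SFinite μ] [SFinite ν] {L : M → N} (hL : Measurable L)
    (hL_add : ∀ x y, L (x + y) = L x + L y) :
    (μ ∗ ν).map L = μ.map L ∗ ν.map L := by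
  have hcomp : L ∘ (fun p : M × M => p.1 + p.2) = (fun q : N × N => q.1 + q.2) ∘ Prod.map L L :=
    funext fun p => hL_add p.1 p.2
  rw [conv, conv, map_map hL measurable_add, hcomp, ← map_map measurable_add (hL.prodMap hL),
    map_prod_map μ ν hL hL]

lemma pi_conv_pi {ι : Type*} [Fintype ι] (μ ν : ι → Measure M) [∀ i, IsFiniteMeasure (μ i)]
    [∀ i, IsFiniteMeasure (ν i)] :
    Measure.pi μ ∗ Measure.pi ν = Measure.pi fun i => μ i ∗ ν i := by
  rw [conv, ← (measurePreserving_arrowProdEquivProdArrow M M ι μ ν).map_eq,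
    map_map (by fun_prop) (MeasurableEquiv.measurable _)]
  exact pi_map_pi fun _ => measurable_add.aemeasurable

lemma ae_ae_add_of_ae_conv {μ ν : Measure M} [SFinite ν] {P : M → Prop}
    (h : ∀ᵐ z ∂(μ ∗ ν), P z) : ∀ᵐ x ∂μ, ∀ᵐ y ∂ν, P (x + y) :=
  Measure.ae_ae_of_ae_prod (ae_of_ae_map measurable_add.aemeasurable h)

lemma ext_of_map_fin_restrict {X : ℕ → Type*} [∀ n, MeasurableSpace (X n)]
    {μ ν : Measure (∀ n, X n)} [IsFiniteMeasure μ]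
    (h : ∀ n : ℕ, μ.map (fun x (i : Fin n) => x i) = ν.map (fun x (i : Fin n) => x i)) :
    μ = ν := by
  have hcyl : ∀ t ∈ measurableCylinders X, μ t = ν t := by
    intro t ht
    obtain ⟨s, S, hS, rfl⟩ := (mem_measurableCylinders t).1 ht
    set n := s.sup id + 1
    have hlt (j : s) : (j : ℕ) < n := Nat.lt_succ_of_le (Finset.le_sup (f := id) j.2)
    let g : (∀ i : Fin n, X i) → ∀ j : s, X j := fun y j => y ⟨j, hlt j⟩
    have hg : Measurable g := by fun_prop
    have hrestrict : cylinder s S = (fun x (i : Fin n) => x i) ⁻¹' (g ⁻¹' S) := rfl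
    rw [hrestrict, ← map_apply (by fun_prop) (hg hS), ← map_apply (by fun_prop) (hg hS), h n]
  exact ext_of_generate_finite _ generateFrom_measurableCylinders.symm
    isPiSystem_measurableCylinders hcyl (hcyl _ (univ_mem_measurableCylinders X))

end MeasureTheory.Measure

lemma enorm_integral_rpow_le_lintegral {α E : Type*} [MeasurableSpace α] [NormedAddCommGroup E]
    [NormedSpace ℝ E] {ν : Measure α} [IsProbabilityMeasure ν] {g : α → E}
    (hg : AEStronglyMeasurable g ν) {q : ℝ} (hq : 1 ≤ q) :
    ‖∫ y, g y ∂ν‖ₑ ^ q ≤ ∫⁻ y, ‖g y‖ₑ ^ q ∂ν := by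
  have hq0 : 0 < q := zero_lt_one.trans_le hq
  have h1 : ‖∫ y, g y ∂ν‖ₑ ≤ eLpNorm' g q ν := calc
    ‖∫ y, g y ∂ν‖ₑ ≤ ∫⁻ y, ‖g y‖ₑ ∂ν := enorm_integral_le_lintegral_enorm g
    _ = eLpNorm' g 1 ν := by simp [eLpNorm'_eq_lintegral_enorm]
    _ ≤ eLpNorm' g q ν := eLpNorm'_le_eLpNorm'_of_exponent_le zero_lt_one hq ν hg
  rw [lintegral_rpow_enorm_eq_rpow_eLpNorm' hq0]
  exact ENNReal.rpow_le_rpow h1 hq0.le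

theorem eLpNorm_integral_add_le_eLpNorm_conv {M E : Type*} [AddMonoid M] [MeasurableSpace M]
    [MeasurableAdd₂ M] [NormedAddCommGroup E] [NormedSpace ℝ E] (μ ν : Measure M)
    [IsProbabilityMeasure ν] {p : ℝ≥0∞} (hp1 : 1 ≤ p) (hp : p ≠ ∞) {f : M → E}
    (hf : AEStronglyMeasurable f (μ ∗ ν)) :
    eLpNorm (fun x => ∫ y, f (x + y) ∂ν) p μ ≤ eLpNorm f p (μ ∗ ν) := by
  set g := hf.mk f
  have hfg : f =ᵐ[μ ∗ ν] g := hf.ae_eq_mk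
  have h_heat : (fun x => ∫ y, f (x + y) ∂ν) =ᵐ[μ] fun x => ∫ y, g (x + y) ∂ν :=
    (Measure.ae_ae_add_of_ae_conv hfg).mono fun x hx => integral_congr_ae hx
  have hp0 : p ≠ 0 := (zero_lt_one.trans_le hp1).ne'
  rw [eLpNorm_congr_ae h_heat, eLpNorm_congr_ae hfg,
    eLpNorm_eq_lintegral_rpow_enorm_toReal hp0 hp, eLpNorm_eq_lintegral_rpow_enorm_toReal hp0 hp]
  refine ENNReal.rpow_le_rpow ?_ (by positivity)
  calc ∫⁻ x, ‖∫ y, g (x + y) ∂ν‖ₑ ^ p.toReal ∂μ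
      ≤ ∫⁻ x, ∫⁻ y, ‖g (x + y)‖ₑ ^ p.toReal ∂ν ∂μ := by
        refine lintegral_mono fun x => enorm_integral_rpow_le_lintegral ?_ ?_
        · exact (hf.stronglyMeasurable_mk.comp_measurable
            (measurable_const_add x)).aestronglyMeasurable
        · simpa using ENNReal.toReal_mono hp hp1
    _ = ∫⁻ z, ‖g z‖ₑ ^ p.toReal ∂(μ ∗ ν) :=
        (Measure.lintegral_conv (hf.stronglyMeasurable_mk.enorm.pow_const _)).symm

lemma pi_gaussianReal_conv_pi_gaussianReal {ι : Type*} [Fintype ι] (a b : ℝ≥0) :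
    Measure.pi (fun _ : ι => gaussianReal 0 a) ∗ Measure.pi (fun _ : ι => gaussianReal 0 b) =
      Measure.pi fun _ : ι => gaussianReal 0 (a + b) := by
  simp [Measure.pi_conv_pi, gaussianReal_conv_gaussianReal]

namespace IsGaussianProductMeasure

variable {a b r : ℝ} {μ ν : Measure (ℕ → ℝ)}

lemma conv (ha : 0 ≤ a) (hb : 0 ≤ b) (hμ : IsGaussianProductMeasure a μ)
    (hν : IsGaussianProductMeasure b ν) : IsGaussianProductMeasure (a + b) (μ ∗ ν) := by
  have := hμ.1
  have := hν.1
  refine ⟨inferInstance, fun n => ?_⟩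
  rw [Measure.map_conv μ ν (by fun_prop) fun _ _ => rfl, hμ.2 n, hν.2 n,
    pi_gaussianReal_conv_pi_gaussianReal, Real.toNNReal_add ha hb]

lemma unique (hμ : IsGaussianProductMeasure r μ) (hν : IsGaussianProductMeasure r ν) : μ = ν :=
  have := hμ.1
  Measure.ext_of_map_fin_restrict fun n => (hμ.2 n).trans (hν.2 n).symm

end IsGaussianProductMeasure

/-- The heat operator `e^{tΔ/2}`, given by convolution with the variance-`t` Gaussian,
is a contraction from `L²(γ_s^∞)` to `L²(γ_{s-t}^∞)` for `0 < t < s`. -/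
theorem heatOperator_contraction_L2
    (s t : ℝ) (ht : 0 < t) (hts : t < s)
    (μs μst μt : Measure (ℕ → ℝ))
    (hμs : IsGaussianProductMeasure s μs)
    (hμst : IsGaussianProductMeasure (s - t) μst)
    (hμt : IsGaussianProductMeasure t μt)
    (f : (ℕ → ℝ) → ℝ) (hf : MemLp f 2 μs) :
    eLpNorm (fun x => ∫ y, f (x + y) ∂μt) 2 μst ≤ eLpNorm f 2 μs := by
  have := hμt.1
  have hconv : μst ∗ μt = μs :=
    (hμst.conv (sub_nonneg.2 hts.le) ht.le hμt).unique (by rwa [sub_add_cancel])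
  rw [← hconv] at hf ⊢
  exact eLpNorm_integral_add_le_eLpNorm_conv μst μt one_le_two ENNReal.ofNat_ne_top hf.1
end

section
/- Fix s > 0 and n ≥ 1, and let p_n ∈ MvPolynomial (Fin n) ℝ be p_n = (1/n) • ∑_{k : Fin n} (X_k^2 - C s). Then the Laplacian of p_n is the constant 2, i.e. ∑_{i : Fin n} pderiv i (pderiv i p_n) = C 2, and the L² norm of p_n with respect to the product Gaussian satisfies ∫ (MvPolynomial.eval x p_n)^2 dγ_s^n(x) = 2 s² / n. (In particular p_n → 0 in L² while Δ p_n = 2 for all n, exhibiting the nonclosability of the Laplacian on polynomials.) -/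
/-!
Under `γ_s` the polynomial `x² - s` is centered with variance `E x⁴ - (E x²)² = 3s² - s² = 2s²`.
The coordinates are independent under the product measure, so `∑ₖ (x_k² - s)` has second
moment `n · 2s²`, and the factor `1/n` turns this into `2s²/n`. On the other hand each `X_k²`
has Laplacian `2`, so the average `p_n` has Laplacian `2` whatever `n` is.
-/

open MeasureTheory ProbabilityTheory MvPolynomial Real
open scoped NNReal Nat

/-- The product Gaussian measure `γ_r^d` of variance `r` on `Fin d → ℝ`. -/
noncomputable def gaussianPi (d : ℕ) (r : ℝ) : Measure (Fin d → ℝ) :=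
  Measure.pi (fun _ : Fin d => gaussianReal 0 r.toNNReal)

namespace MvPolynomial

variable {σ R : Type*} [Fintype σ] [CommSemiring R]

noncomputable def laplacian : MvPolynomial σ R →ₗ[R] MvPolynomial σ R :=
  ∑ i, (pderiv i).toLinearMap ∘ₗ (pderiv i).toLinearMap

theorem laplacian_apply (p : MvPolynomial σ R) :
    laplacian p = ∑ i, pderiv i (pderiv i p) :=
  LinearMap.sum_apply _ _ _

@[simp]
theorem laplacian_C (a : R) : laplacian (C a : MvPolynomial σ R) = 0 := by
  simp [laplacian_apply]

@[simp]
theorem laplacian_X_sq (j : σ) : laplacian (X j ^ 2 : MvPolynomial σ R) = 2 := by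
  classical
  simp [laplacian_apply, pderiv_X, Pi.single_apply, apply_ite,
    ← map_ofNat (C : R →+* MvPolynomial σ R) 2]

theorem laplacian_sum_X_sq_sub_C {R : Type*} [CommRing R] (a : R) :
    laplacian (∑ k : σ, (X k ^ 2 - C a : MvPolynomial σ R)) = C (2 * Fintype.card σ : R) := by
  simp only [map_sum, map_sub, laplacian_X_sq, laplacian_C, sub_zero, Finset.sum_const,
    Finset.card_univ, nsmul_eq_mul, map_mul, map_natCast, map_ofNat, mul_comm]

end MvPolynomial

theorem integral_even_pow_mul_exp_neg_mul_sq {b : ℝ} (hb : 0 < b) (k : ℕ) :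
    ∫ x : ℝ, x ^ (2 * k) * exp (-b * x ^ 2) = b ^ (-(k + 1 / 2 : ℝ)) * Gamma (k + 1 / 2) := by
  set f : ℝ → ℝ := fun t => t ^ ((2 * k : ℕ) : ℝ) * exp (-b * t ^ (2 : ℝ))
  have h_even : (fun x : ℝ => x ^ (2 * k) * exp (-b * x ^ 2)) = fun x => f |x| := by
    ext x
    simp only [f, rpow_natCast, rpow_two, pow_mul, sq_abs]
  rw [h_even, integral_comp_abs, integral_rpow_mul_exp_neg_mul_rpow two_pos
    (neg_one_lt_zero.trans_le (Nat.cast_nonneg _)) hb]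
  push_cast
  ring_nf

-- At `k = 0` the truncated `2 * 0 - 1 = 0` gives `0‼ = 1`, the correct value of `(-1)‼`.
theorem integral_even_pow_gaussianReal (v : ℝ≥0) (k : ℕ) :
    ∫ x, x ^ (2 * k) ∂gaussianReal 0 v = v ^ k * (2 * k - 1 : ℕ)‼ := by
  rcases eq_or_ne v 0 with rfl | hv
  · cases k <;> simp [gaussianReal_zero_var]
  have h_pdf (x : ℝ) : gaussianPDFReal 0 v x • x ^ (2 * k)
      = (√(2 * π * v))⁻¹ * (x ^ (2 * k) * exp (-(2 * v : ℝ)⁻¹ * x ^ 2)) := by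
    rw [gaussianPDFReal, smul_eq_mul, sub_zero]
    ring_nf
  rw [integral_gaussianReal_eq_integral_smul hv]
  simp_rw [h_pdf]
  rw [integral_const_mul, integral_even_pow_mul_exp_neg_mul_sq (by positivity), Gamma_nat_add_half,
    inv_rpow (by positivity), rpow_neg (by positivity), inv_inv, rpow_add (by positivity),
    rpow_natCast, ← sqrt_eq_rpow, show 2 * π * v = π * (2 * v) by ring, sqrt_mul pi_pos.le]
  have h_sqrt_two_v : √(2 * (v : ℝ)) ≠ 0 := by positivity
  have h_sqrt_pi : √π ≠ 0 := by positivity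
  field_simp
  ring

theorem integrable_pow_gaussianReal (μ : ℝ) (v : ℝ≥0) (n : ℕ) :
    Integrable (fun x => x ^ n) (gaussianReal μ v) := by
  refine (integrable_norm_iff (by fun_prop)).1 ?_
  simpa only [norm_pow, id] using (memLp_id_gaussianReal (μ := μ) (v := v) n).integrable_norm_pow'

theorem memLp_sq_gaussianReal (μ : ℝ) (v : ℝ≥0) :
    MemLp (fun x => x ^ 2) 2 (gaussianReal μ v) := by
  rw [memLp_two_iff_integrable_sq (by fun_prop)]
  simpa only [← pow_mul] using integrable_pow_gaussianReal μ v (2 * 2)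

theorem variance_sq_gaussianReal (v : ℝ≥0) :
    Var[fun x => x ^ 2; gaussianReal 0 v] = 2 * v ^ 2 := by
  have h2 := integral_even_pow_gaussianReal v 1
  have h4 := integral_even_pow_gaussianReal v 2
  rw [variance_eq_sub (memLp_sq_gaussianReal 0 v)]
  simp only [Pi.pow_apply, ← pow_mul]
  norm_num at h2 h4 ⊢
  rw [h2, h4]
  ring

theorem integral_sq_sum_eval_pi_eq_sum_variance {ι : Type*} [Fintype ι] {Ω : ι → Type*}
    {mΩ : ∀ i, MeasurableSpace (Ω i)} {μ : (i : ι) → Measure (Ω i)}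
    [∀ i, IsProbabilityMeasure (μ i)] {X : Π i, Ω i → ℝ} (hX : ∀ i, MemLp (X i) 2 (μ i))
    (h_centered : ∀ i, ∫ ω, X i ω ∂μ i = 0) :
    ∫ ω, (∑ i, X i (ω i)) ^ 2 ∂Measure.pi μ = ∑ i, Var[X i; μ i] := by
  have h_meas (i : ι) : AEMeasurable (fun ω : Π i, Ω i ↦ X i (ω i)) (Measure.pi μ) :=
    (hX i).aestronglyMeasurable.aemeasurable.comp_quasiMeasurePreserving
      (Measure.quasiMeasurePreserving_eval _ i)
  have h_mean : ∫ ω, (∑ i, fun ω : Π i, Ω i ↦ X i (ω i)) ω ∂Measure.pi μ = 0 := by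
    simp only [Finset.sum_apply]
    rw [integral_finsetSum _ fun i _ ↦ integrable_comp_eval ((hX i).integrable one_le_two)]
    simp [integral_comp_eval (hX _).aestronglyMeasurable, h_centered]
  rw [← variance_sum_pi hX,
    variance_of_integral_eq_zero (Finset.aemeasurable_sum _ fun i _ ↦ h_meas i) h_mean]
  simp only [Finset.sum_apply]

theorem integral_sq_sum_sq_sub_gaussianPi {s : ℝ} (hs : 0 ≤ s) (n : ℕ) :
    ∫ x, (∑ k, (x k ^ 2 - s)) ^ 2 ∂gaussianPi n s = n * (2 * s ^ 2) := by
  have h_coe : s.toNNReal = s := Real.coe_toNNReal s hs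
  have h_second_moment : ∫ x, x ^ 2 ∂gaussianReal 0 s.toNNReal = s := by
    simpa [h_coe] using integral_even_pow_gaussianReal s.toNNReal 1
  have h_centered : ∫ x, (x ^ 2 - s) ∂gaussianReal 0 s.toNNReal = 0 := by
    rw [integral_sub (integrable_pow_gaussianReal 0 _ 2) (integrable_const s), h_second_moment,
      integral_const, probReal_univ, one_smul, sub_self]
  have h_memLp : MemLp (fun x : ℝ => x ^ 2 - s) 2 (gaussianReal 0 s.toNNReal) :=
    (memLp_sq_gaussianReal 0 _).sub (memLp_const s)
  rw [gaussianPi, integral_sq_sum_eval_pi_eq_sum_variance (X := fun _ x => x ^ 2 - s)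
    (fun _ ↦ h_memLp) (fun _ ↦ h_centered),
    variance_sub_const (memLp_sq_gaussianReal 0 _).aestronglyMeasurable, variance_sq_gaussianReal,
    h_coe, Finset.sum_const, Finset.card_univ, Fintype.card_fin, nsmul_eq_mul]

/-- For `p_n = (1/n) ∑_k (X_k² - s)`, the Laplacian of `p_n` is the constant `2`, while
the `L²(γ_s^n)` norm of `p_n` is `2s²/n` (which tends to `0`): the Laplacian on polynomials
is not closable. -/
theorem laplacian_not_closable_witness
    (s : ℝ) (hs : 0 < s) (n : ℕ) (hn : 1 ≤ n)
    (pn : MvPolynomial (Fin n) ℝ)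
    (hpn : pn = ((1 : ℝ) / n) • ∑ k : Fin n, (X k ^ 2 - C s)) :
    (∑ i : Fin n, pderiv i (pderiv i pn)) = C 2 ∧
      ∫ x, (MvPolynomial.eval x pn) ^ 2 ∂(gaussianPi n s) = 2 * s ^ 2 / n := by
  have hn' : (n : ℝ) ≠ 0 := Nat.cast_ne_zero.mpr (by omega)
  constructor
  · rw [← laplacian_apply, hpn, map_smul, laplacian_sum_X_sq_sub_C, smul_eq_C_mul, ← C_mul,
      Fintype.card_fin]
    congr 1
    field_simp
  · have h_eval (x : Fin n → ℝ) :
        MvPolynomial.eval x pn ^ 2 = (1 / n) ^ 2 * (∑ k, (x k ^ 2 - s)) ^ 2 := by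
      simp [hpn, smul_eval, mul_pow]
    simp_rw [h_eval]
    rw [integral_const_mul, integral_sq_sum_sq_sub_gaussianPi hs.le]
    field_simp
end

section
/- Fix s > 0, t > 0, and n ≥ 1, and let f_n : (ℕ → ℝ) → ℝ be f_n(x) = (1/n) ∑_{k < n} (x_k² - s). Then for every x : ℕ → ℝ, the heat operator on this function satisfies the pointwise identity ∫ f_n(x + y) dγ_t^∞(y) = f_n(x) + t. (Consequently, as n → ∞, f_n → 0 in L²(γ_s^∞) while the heat operator applied to f_n converges to the constant t, exhibiting the nonclosability of the heat operator.) -/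
open MeasureTheory ProbabilityTheory

/-! Under `γ_t^∞` the coordinate `y_k` is a centred Gaussian of variance `t`, so `x_k + y_k` is
Gaussian with mean `x_k` and variance `t`, and its second moment is `x_k² + t`. Averaging over
`k < n` therefore adds exactly `t` to `f_n(x)`. -/

open scoped NNReal

namespace ProbabilityTheory

lemma integral_sq_gaussianReal (m : ℝ) (v : ℝ≥0) : ∫ x, x ^ 2 ∂gaussianReal m v = m ^ 2 + v := by
  have h := variance_eq_sub (memLp_id_gaussianReal (μ := m) (v := v) 2)
  rw [variance_id_gaussianReal] at h
  simp only [Pi.pow_apply, id_eq, integral_id_gaussianReal] at h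
  linarith

lemma HasLaw.integrable_comp {Ω 𝓧 E : Type*} {mΩ : MeasurableSpace Ω} {m𝓧 : MeasurableSpace 𝓧}
    [NormedAddCommGroup E] {P : Measure Ω} {μ : Measure 𝓧} {X : Ω → 𝓧} {f : 𝓧 → E}
    (hX : HasLaw X μ P) (hf : Integrable f μ) : Integrable (f ∘ X) P :=
  Integrable.comp_aemeasurable (by rwa [hX.map_eq]) hX.aemeasurable

end ProbabilityTheory

namespace IsGaussianProductMeasure

variable {r : ℝ} {μ : Measure (ℕ → ℝ)}

-- The `k`-th coordinate is the last coordinate of the marginal on `Fin (k + 1)`.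
lemma hasLaw_eval (h : IsGaussianProductMeasure r μ) (k : ℕ) :
    HasLaw (fun y => y k) (gaussianReal 0 r.toNNReal) μ :=
  (measurePreserving_eval _ (Fin.last k)).hasLaw.comp
    ⟨(measurable_pi_lambda _ fun _ => measurable_pi_apply _).aemeasurable, h.2 (k + 1)⟩

lemma hasLaw_const_add_eval (h : IsGaussianProductMeasure r μ) (a : ℝ) (k : ℕ) :
    HasLaw (fun y => a + y k) (gaussianReal a r.toNNReal) μ := by
  simpa using gaussianReal_const_add (h.hasLaw_eval k) a

lemma integrable_const_add_eval_sq (h : IsGaussianProductMeasure r μ) (a : ℝ) (k : ℕ) :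
    Integrable (fun y => (a + y k) ^ 2) μ :=
  (h.hasLaw_const_add_eval a k).integrable_comp (f := fun x => x ^ 2)
    (memLp_id_gaussianReal 2).integrable_sq

lemma integral_const_add_eval_sq (h : IsGaussianProductMeasure r μ) (hr : 0 ≤ r) (a : ℝ)
    (k : ℕ) : ∫ y, (a + y k) ^ 2 ∂μ = a ^ 2 + r := by
  rw [← Real.coe_toNNReal r hr, ← integral_sq_gaussianReal]
  exact (h.hasLaw_const_add_eval a k).integral_comp (f := fun x => x ^ 2) (by fun_prop)

end IsGaussianProductMeasure

theorem heatOperator_on_fn_general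
    (s t : ℝ) (ht : 0 < t) (n : ℕ) (hn : 1 ≤ n)
    (μt : Measure (ℕ → ℝ)) (hμt : IsGaussianProductMeasure t μt)
    (f : (ℕ → ℝ) → ℝ)
    (hf : f = fun x => (1 / (n : ℝ)) * ∑ k ∈ Finset.range n, (x k ^ 2 - s)) :
    ∀ x : ℕ → ℝ, ∫ y, f (x + y) ∂μt = f x + t := by
  intro x
  have : IsProbabilityMeasure μt := hμt.1
  have hn' : (n : ℝ) ≠ 0 := by positivity
  have hintegrable (k : ℕ) : Integrable (fun y => (x k + y k) ^ 2 - s) μt :=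
    (hμt.integrable_const_add_eval_sq (x k) k).sub (integrable_const s)
  have hterm (k : ℕ) : ∫ y, ((x k + y k) ^ 2 - s) ∂μt = (x k ^ 2 - s) + t := by
    rw [integral_sub (hμt.integrable_const_add_eval_sq _ _) (integrable_const s),
      hμt.integral_const_add_eval_sq ht.le, integral_const, probReal_univ, one_smul]
    ring
  calc ∫ y, f (x + y) ∂μt
      = 1 / n * ∑ k ∈ Finset.range n, ∫ y, ((x k + y k) ^ 2 - s) ∂μt := by
        simp only [hf, Pi.add_apply]
        rw [integral_const_mul, integral_finsetSum _ fun k _ => hintegrable k]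
    _ = f x + t := by
        simp only [hterm, hf, Finset.sum_add_distrib, Finset.sum_const, Finset.card_range,
          nsmul_eq_mul]
        field_simp

/-- For `f_n(x) = (1/n) ∑_{k<n} (x_k² - s)`, the heat operator (convolution with the
variance-`t` product Gaussian) satisfies `(e^{tΔ/2} f_n)(x) = f_n(x) + t` pointwise. -/
theorem heatOperator_on_fn
    (s t : ℝ) (hs : 0 < s) (ht : 0 < t) (n : ℕ) (hn : 1 ≤ n)
    (μt : Measure (ℕ → ℝ)) (hμt : IsGaussianProductMeasure t μt)
    (f : (ℕ → ℝ) → ℝ)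
    (hf : f = fun x => (1 / (n : ℝ)) * ∑ k ∈ Finset.range n, (x k ^ 2 - s)) :
    ∀ x : ℕ → ℝ, ∫ y, f (x + y) ∂μt = f x + t :=
  heatOperator_on_fn_general s t ht n hn μt hμt f hf
end

section
/- Fix s > 0. For all natural numbers n, m, the Hermite polynomials h_{n,s} and h_{m,s} are orthogonal in L² of the variance-s Gaussian with norm given by ∫ (Polynomial.eval x h_{n,s}) * (Polynomial.eval x h_{m,s}) d(gaussianReal 0 s)(x) = if n = m then n! * s^n else 0. -/
open MeasureTheory ProbabilityTheory Polynomial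

/-!
Commuting `e^{-sD²/2}` past `D` and past multiplication by `X` gives `h_{n+1}' = (n+1) h_n` and
`h_{n+1} = X h_n - s h_n'`. Gaussian integration by parts, `E[X p] = s E[p']`, says that `X - sD`
is adjoint to `sD` in `L²(γ_s)`, so `h_n = (X - sD)ⁿ 1` gives `E[h_n q] = sⁿ E[q⁽ⁿ⁾]` for every
polynomial `q`. For `q = h_m` the `n`-th derivative is `n!` when `m = n` and `0` when `m < n`.
-/

/-- The Hermite polynomial `h_{n,s} = e^{-sΔ/2}(X^n)`, the backward heat operator applied
to the monomial `X^n`. -/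
noncomputable def hermitePoly (s : ℝ) (n : ℕ) : Polynomial ℝ :=
  ∑ k ∈ Finset.range (n / 2 + 1),
    ((-s / 2) ^ k / (k.factorial : ℝ)) • (⇑(derivative (R := ℝ)))^[2 * k] (X ^ n)

open scoped NNReal

/-- The `N`-term partial sum of `e^{-sD²/2}`, which is the whole operator on polynomials of
degree `< 2N`. -/
noncomputable def backwardHeatSum (s : ℝ) (N : ℕ) : Module.End ℝ ℝ[X] :=
  ∑ k ∈ Finset.range N, ((-s / 2) ^ k / (k.factorial : ℝ)) • derivative ^ (2 * k)

section Hermite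

variable (s : ℝ)

lemma backwardHeatSum_apply (N : ℕ) (p : ℝ[X]) :
    backwardHeatSum s N p =
      ∑ k ∈ Finset.range N, ((-s / 2) ^ k / (k.factorial : ℝ)) • derivative^[2 * k] p := by
  simp [backwardHeatSum, Module.End.pow_apply]

lemma commute_derivative_backwardHeatSum (N : ℕ) : Commute derivative (backwardHeatSum s N) :=
  .sum_right _ _ _ fun _ _ ↦ ((Commute.refl _).pow_right _).smul_right _

lemma backwardHeatSum_succ_apply_mul_X (N : ℕ) (p : ℝ[X]) :
    backwardHeatSum s (N + 1) (p * X) =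
      backwardHeatSum s (N + 1) p * X - s • derivative (backwardHeatSum s N p) := by
  simp only [backwardHeatSum_apply, iterate_derivative_mul_X, smul_add, Finset.sum_add_distrib,
    Finset.sum_mul, smul_mul_assoc, derivative_sum, derivative_smul, Finset.smul_sum]
  rw [sub_eq_add_neg, ← Finset.sum_neg_distrib]
  congr 1
  rw [Finset.sum_range_succ']
  simp only [mul_zero, zero_smul, smul_zero, add_zero]
  refine Finset.sum_congr rfl fun k _ ↦ ?_
  rw [show 2 * (k + 1) - 1 = 2 * k + 1 by omega, Function.iterate_succ_apply',
    ← Nat.cast_smul_eq_nsmul ℝ, smul_smul, smul_smul, ← neg_smul, Nat.factorial_succ]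
  congr 1
  push_cast
  field_simp
  ring

lemma hermitePoly_eq_backwardHeatSum {n N : ℕ} (h : n < 2 * N) :
    hermitePoly s n = backwardHeatSum s N (X ^ n) := by
  rw [backwardHeatSum_apply, hermitePoly]
  refine Finset.sum_subset (Finset.range_subset_range.2 (by omega)) fun k _ hk ↦ ?_
  rw [iterate_derivative_eq_zero (by simp at hk; simp; omega), smul_zero]

lemma hermitePoly_zero : hermitePoly s 0 = 1 := by
  simp [hermitePoly]

lemma hermitePoly_succ (n : ℕ) :
    hermitePoly s (n + 1) = hermitePoly s n * X - s • derivative (hermitePoly s n) := by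
  rw [hermitePoly_eq_backwardHeatSum s (N := n + 2) (by omega), pow_succ,
    backwardHeatSum_succ_apply_mul_X, ← hermitePoly_eq_backwardHeatSum s (by omega),
    ← hermitePoly_eq_backwardHeatSum s (by omega)]

lemma derivative_hermitePoly_succ (n : ℕ) :
    derivative (hermitePoly s (n + 1)) = ((n + 1 : ℕ) : ℝ) • hermitePoly s n := by
  rw [hermitePoly_eq_backwardHeatSum s (N := n + 1) (by omega),
    hermitePoly_eq_backwardHeatSum s (N := n + 1) (by omega), ← Module.End.mul_apply,
    (commute_derivative_backwardHeatSum s _).eq, Module.End.mul_apply, derivative_X_pow,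
    ← smul_eq_C_mul, map_smul]
  simp

lemma iterate_derivative_hermitePoly_self (n : ℕ) :
    derivative^[n] (hermitePoly s n) = C (n.factorial : ℝ) := by
  induction n with
  | zero => simp [hermitePoly_zero]
  | succ n ih =>
    rw [Function.iterate_succ_apply, derivative_hermitePoly_succ, iterate_derivative_smul, ih,
      smul_eq_C_mul, ← C_mul, Nat.factorial_succ, Nat.cast_mul]

lemma iterate_derivative_hermitePoly_of_lt {m n : ℕ} (h : m < n) :
    derivative^[n] (hermitePoly s m) = 0 := by
  rw [← Nat.sub_add_cancel h.le, Function.iterate_add_apply, iterate_derivative_hermitePoly_self,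
    iterate_derivative_C (by omega)]

end Hermite

section Gaussian

variable {μ : ℝ} {v : ℝ≥0}

lemma integrable_eval_of_integrable_pow {ν : Measure ℝ}
    (h : ∀ n : ℕ, Integrable (fun x ↦ x ^ n) ν) (p : ℝ[X]) :
    Integrable (fun x ↦ p.eval x) ν := by
  induction p using Polynomial.induction_on' with
  | add p q hp hq => simp only [eval_add]; exact hp.add hq
  | monomial n a => simpa using (h n).const_mul a

lemma integrable_eval_gaussianReal (p : ℝ[X]) :
    Integrable (fun x ↦ p.eval x) (gaussianReal μ v) :=
  integrable_eval_of_integrable_pow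
    (integrable_pow_of_mem_interior_integrableExpSet (X := fun x ↦ x) (by simp)) p

lemma integrable_gaussianReal_iff (hv : v ≠ 0) {f : ℝ → ℝ} :
    Integrable f (gaussianReal μ v) ↔ Integrable (fun x ↦ gaussianPDFReal μ v x * f x) := by
  rw [gaussianReal_of_var_ne_zero μ hv, gaussianPDF_def,
    integrable_withDensity_iff_integrable_smul' (by fun_prop) (by simp)]
  simp [ENNReal.toReal_ofReal (gaussianPDFReal_nonneg μ v _)]

lemma hasDerivAt_gaussianPDFReal (hv : v ≠ 0) (x : ℝ) :
    HasDerivAt (gaussianPDFReal μ v) (-((x - μ) / v) * gaussianPDFReal μ v x) x := by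
  have hv' : (v : ℝ) ≠ 0 := by exact_mod_cast hv
  have hexponent : HasDerivAt (fun y ↦ -(y - μ) ^ 2 / (2 * v)) (-((x - μ) / v)) x :=
    ((((hasDerivAt_id x).sub_const μ).pow 2).neg.div_const (2 * (v : ℝ))).congr_deriv
      (by field_simp; simp)
  rw [gaussianPDFReal_def]
  exact (hexponent.exp.const_mul _).congr_deriv (by ring)

theorem integral_sub_mul_eval_gaussianReal (μ : ℝ) (v : ℝ≥0) (p : ℝ[X]) :
    ∫ x, (x - μ) * p.eval x ∂gaussianReal μ v =
      v * ∫ x, (derivative p).eval x ∂gaussianReal μ v := by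
  rcases eq_or_ne v 0 with rfl | hv
  · simp [gaussianReal_zero_var]
  have hint (q : ℝ[X]) : Integrable (fun x ↦ gaussianPDFReal μ v x * q.eval x) :=
    (integrable_gaussianReal_iff hv).1 (integrable_eval_gaussianReal q)
  have ibp := integral_mul_deriv_eq_deriv_mul_of_integrable (u := fun x ↦ p.eval x)
    (v := gaussianPDFReal μ v) (fun x _ ↦ p.hasDerivAt x)
    (fun x _ ↦ hasDerivAt_gaussianPDFReal hv x)
    ((hint (C (-(v : ℝ)⁻¹) * (X - C μ) * p)).congr (.of_forall fun x ↦ by simp; ring))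
    ((hint (derivative p)).congr (.of_forall fun x ↦ by simp; ring))
    ((hint p).congr (.of_forall fun x ↦ by simp; ring))
  simp only [integral_gaussianReal_eq_integral_smul hv, smul_eq_mul]
  calc ∫ x, gaussianPDFReal μ v x * ((x - μ) * p.eval x)
      = -v * ∫ x, p.eval x * (-((x - μ) / v) * gaussianPDFReal μ v x) := by
        rw [← integral_const_mul]
        congr with x
        field_simp
    _ = v * ∫ x, gaussianPDFReal μ v x * (derivative p).eval x := by
        simp_rw [ibp, mul_comm (gaussianPDFReal μ v _)]
        ring

end Gaussian

noncomputable def gaussianExpectation (μ : ℝ) (v : ℝ≥0) : ℝ[X] →ₗ[ℝ] ℝ where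
  toFun p := ∫ x, p.eval x ∂gaussianReal μ v
  map_add' p q := by
    simp only [eval_add]
    exact integral_add (integrable_eval_gaussianReal p) (integrable_eval_gaussianReal q)
  map_smul' c p := by simp [integral_const_mul]

section GaussianExpectation

variable (μ : ℝ) (v : ℝ≥0)

lemma gaussianExpectation_apply (p : ℝ[X]) :
    gaussianExpectation μ v p = ∫ x, p.eval x ∂gaussianReal μ v := rfl

lemma gaussianExpectation_C (c : ℝ) : gaussianExpectation μ v (C c) = c := by
  simp [gaussianExpectation_apply]

lemma gaussianExpectation_X_sub_C_mul (p : ℝ[X]) :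
    gaussianExpectation μ v ((X - C μ) * p) = v * gaussianExpectation μ v (derivative p) := by
  simpa [gaussianExpectation_apply] using integral_sub_mul_eval_gaussianReal μ v p

end GaussianExpectation

lemma gaussianExpectation_hermitePoly_succ_mul (v : ℝ≥0) (n : ℕ) (q : ℝ[X]) :
    gaussianExpectation 0 v (hermitePoly v (n + 1) * q) =
      v * gaussianExpectation 0 v (hermitePoly v n * derivative q) := by
  have hsplit : (hermitePoly v n * X - (v : ℝ) • derivative (hermitePoly v n)) * q =
      (X - C 0) * (hermitePoly v n * q) - (v : ℝ) • (derivative (hermitePoly v n) * q) := by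
    rw [map_zero, sub_zero, sub_mul, smul_mul_assoc]
    ring
  rw [hermitePoly_succ, hsplit, map_sub, map_smul, gaussianExpectation_X_sub_C_mul,
    derivative_mul, map_add, smul_eq_mul]
  ring

lemma gaussianExpectation_hermitePoly_mul (v : ℝ≥0) (n : ℕ) (q : ℝ[X]) :
    gaussianExpectation 0 v (hermitePoly v n * q) =
      v ^ n * gaussianExpectation 0 v (derivative^[n] q) := by
  induction n generalizing q with
  | zero => simp [hermitePoly_zero]
  | succ n ih =>
    rw [gaussianExpectation_hermitePoly_succ_mul, ih, Function.iterate_succ_apply, pow_succ']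
    ring

/-- The Hermite polynomials are orthogonal in `L²` of the variance-`s` Gaussian, with
`‖h_{n,s}‖² = n! sⁿ`. -/
theorem hermitePoly_orthogonal (s : ℝ) (hs : 0 < s) (n m : ℕ) :
    ∫ x, Polynomial.eval x (hermitePoly s n) * Polynomial.eval x (hermitePoly s m)
        ∂(gaussianReal 0 s.toNNReal) =
      if n = m then (n.factorial : ℝ) * s ^ n else 0 := by
  lift s to ℝ≥0 using hs.le
  simp only [Real.toNNReal_coe, ← eval_mul, ← gaussianExpectation_apply]
  rcases lt_trichotomy n m with h | rfl | h
  · rw [mul_comm, gaussianExpectation_hermitePoly_mul, iterate_derivative_hermitePoly_of_lt _ h,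
      map_zero, mul_zero, if_neg h.ne]
  · rw [gaussianExpectation_hermitePoly_mul, iterate_derivative_hermitePoly_self,
      gaussianExpectation_C, if_pos rfl, mul_comm]
  · rw [gaussianExpectation_hermitePoly_mul, iterate_derivative_hermitePoly_of_lt _ h,
      map_zero, mul_zero, if_neg h.ne']
end

section
/- Fix s ∈ ℝ and n : ℕ. The Hermite polynomial h_{n,s} is an eigenvector of the number operator N_s = D - sΔ with eigenvalue n: in ℝ[X], X * derivative h_{n,s} - s • derivative (derivative h_{n,s}) = n • h_{n,s}. -/
open Polynomial

/-- The Hermite polynomial `h_{n,s}` is an eigenvector of the number operator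
`N_s = X d/dx - s d²/dx²` with eigenvalue `n`. -/
theorem numberOp_hermitePoly (s : ℝ) (n : ℕ) :
    X * derivative (hermitePoly s n) -
        s • derivative (derivative (hermitePoly s n)) =
      n • hermitePoly s n := by
  classical
  set m := n / 2 with hm
  set c : ℕ → ℝ := fun k => (-s / 2) ^ k / (k.factorial : ℝ) with hc
  set G : ℕ → ℝ[X] := fun j => (⇑(derivative (R := ℝ)))^[j] (X ^ n) with hG
  have hH : hermitePoly s n = ∑ k ∈ Finset.range (m + 1), c k • G (2 * k) := rfl
  have hGd : ∀ j, derivative (G j) = G (j + 1) := fun j =>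
    (Function.iterate_succ_apply' _ j _).symm
  have hXd : ∀ k, X * G (2 * k + 1) = ((n - 2 * k : ℕ) : ℝ) • G (2 * k) := by
    intro k
    simp only [hG, Polynomial.iterate_derivative_X_pow_eq_smul, Nat.descFactorial_succ]
    rcases Nat.eq_zero_or_pos (n - 2 * k) with h | h
    · simp [h]
    · have hx : (X : ℝ[X]) * X ^ (n - (2 * k + 1)) = X ^ (n - 2 * k) := by
        rw [← pow_succ']
        congr 1
        omega
      rw [mul_smul_comm, hx, Nat.cast_mul, mul_smul]
  have hGz : G (2 * (m + 1)) = 0 := by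
    have hd : n.descFactorial (2 * (m + 1)) = 0 :=
      Nat.descFactorial_eq_zero_iff_lt.mpr (by omega)
    simp [hG, Polynomial.iterate_derivative_X_pow_eq_smul, hd]
  set B : ℕ → ℝ[X] := fun k => (2 * (k : ℝ) * c k) • G (2 * k) with hB
  have hLHS : X * derivative (hermitePoly s n) -
      s • derivative (derivative (hermitePoly s n)) =
      ∑ k ∈ Finset.range (m + 1),
        ((((n - 2 * k : ℕ) : ℝ) * c k) • G (2 * k) - (s * c k) • G (2 * k + 2)) := by
    rw [hH, derivative_sum, derivative_sum]
    simp only [derivative_smul, hGd, Finset.mul_sum, Finset.smul_sum,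
      ← Finset.sum_sub_distrib]
    refine Finset.sum_congr rfl fun k hk => ?_
    have h1 : 2 * k + 1 + 1 = 2 * k + 2 := by omega
    rw [mul_smul_comm, hXd k, smul_smul, smul_smul, h1, mul_comm (c k)]
  rw [hLHS, hH, ← Nat.cast_smul_eq_nsmul ℝ, Finset.smul_sum, ← sub_eq_zero,
    ← Finset.sum_sub_distrib]
  have key : ∀ k ∈ Finset.range (m + 1),
      ((((n - 2 * k : ℕ) : ℝ) * c k) • G (2 * k) - (s * c k) • G (2 * k + 2)) -
        (n : ℝ) • c k • G (2 * k) = B (k + 1) - B k := by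
    intro k hk
    rw [Finset.mem_range, Nat.lt_succ_iff] at hk
    have h2k : 2 * k ≤ n := by omega
    have hcast : ((n - 2 * k : ℕ) : ℝ) = (n : ℝ) - 2 * k := by
      push_cast [h2k]; ring
    have hidx : 2 * (k + 1) = 2 * k + 2 := by omega
    have hcc : 2 * ((k : ℝ) + 1) * c (k + 1) = -(s * c k) := by
      simp only [hc, pow_succ, Nat.factorial_succ]
      have hk0 : (k.factorial : ℝ) ≠ 0 := Nat.cast_ne_zero.mpr k.factorial_ne_zero
      have hk1 : ((k : ℝ) + 1) ≠ 0 := by positivity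
      push_cast
      field_simp
    simp only [hB, hidx]
    push_cast
    rw [hcc, hcast]
    module
  rw [Finset.sum_congr rfl key, Finset.sum_range_sub B (m + 1), hB]
  simp [hGz]
end

section
/- Let 𝔸 be a complete normed real algebra (a Banach algebra), let a, b ∈ 𝔸, and let α ∈ ℝ with α ≠ 0 satisfy the commutation relation a * b - b * a = α • a. Then for every τ ∈ ℝ, the special Baker–Campbell–Hausdorff formula holds: exp(τ • (a + b)) = exp(τ • b) * exp(((Real.exp (τ * α) - 1) / α) • a). -/
/-!
Both sides, as functions of `τ`, solve the linear equation `F' = (a + b) F` with `F 0 = 1`.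
For the right-hand side `F t = exp (t • b) * exp (g t • a)` with `g t = (e^{tα} - 1) / α`, the
relation `[a, b] = α a` says that `a` intertwines `b` with `b + α`, hence
`a * exp (t • b) = e^{tα} exp (t • b) * a`; since `g' t = e^{tα}`, the product rule gives
`F' = b F + a F`. Uniqueness holds because `exp (-t • (a + b)) * F t` has zero derivative.
-/

open NormedSpace

theorem Real.hasDerivAt_exp_mul_sub_one_div {α : ℝ} (hα : α ≠ 0) (t : ℝ) :
    HasDerivAt (fun s => (Real.exp (s * α) - 1) / α) (Real.exp (t * α)) t := by
  have h := (((hasDerivAt_mul_const (x := t) α).exp).sub_const 1).div_const α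
  rwa [mul_div_assoc, div_self hα, mul_one] at h

section

variable {𝔸 : Type*} [NormedRing 𝔸] [NormedAlgebra ℝ 𝔸] [CompleteSpace 𝔸]

theorem exp_add_smul_one (x : 𝔸) (r : ℝ) :
    exp (x + r • (1 : 𝔸)) = Real.exp r • exp x := by
  -- the algebraic facts about `exp` are stated for `ℚ`-algebras, which is not an instance here
  let : NormedAlgebra ℚ 𝔸 := NormedAlgebra.restrictScalars ℚ ℝ 𝔸
  rw [add_comm, exp_add_of_commute ((Commute.one_left x).smul_left r),
    ← Algebra.algebraMap_eq_smul_one, ← algebraMap_exp_comm, ← Real.exp_eq_exp_ℝ,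
    Algebra.smul_def]

theorem mul_exp_smul_of_commutator_eq_smul {a b : 𝔸} {α : ℝ} (h : a * b - b * a = α • a)
    (t : ℝ) : a * exp (t • b) = Real.exp (t * α) • (exp (t • b) * a) := by
  let : NormedAlgebra ℚ 𝔸 := NormedAlgebra.restrictScalars ℚ ℝ 𝔸
  have hab : a * b = (b + α • 1) * a := by
    rw [add_mul, smul_one_mul, ← h, add_sub_cancel]
  have hsemiconj : SemiconjBy a (t • b) (t • b + (t * α) • (1 : 𝔸)) := by
    rw [SemiconjBy, mul_smul_comm, hab, mul_smul, ← smul_add, smul_mul_assoc]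
  rw [hsemiconj.exp_right.eq, exp_add_smul_one, smul_mul_assoc]

theorem hasDerivAt_exp_smul_mul_exp_smul_of_commutator_eq_smul {a b : 𝔸} {α : ℝ}
    (h : a * b - b * a = α • a) {g : ℝ → ℝ} {t : ℝ}
    (hg : HasDerivAt g (Real.exp (t * α)) t) :
    HasDerivAt (fun s => exp (s • b) * exp (g s • a))
      ((a + b) * (exp (t • b) * exp (g t • a))) t := by
  have hb : HasDerivAt (fun s : ℝ => exp (s • b)) (b * exp (t • b)) t :=
    hasDerivAt_exp_smul_const' b t
  have ha : HasDerivAt (fun s => exp (g s • a)) (Real.exp (t * α) • (a * exp (g t • a))) t :=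
    (hasDerivAt_exp_smul_const' a (g t)).scomp t hg
  refine (hb.mul ha).congr_deriv ?_
  rw [mul_smul_comm, ← mul_assoc, ← smul_mul_assoc,
    ← mul_exp_smul_of_commutator_eq_smul h t, add_mul, mul_assoc, mul_assoc, add_comm]

theorem eq_exp_smul_of_hasDerivAt {F : ℝ → 𝔸} {c : 𝔸} (hF₀ : F 0 = 1)
    (hF : ∀ t, HasDerivAt F (c * F t) t) (t : ℝ) : F t = exp (t • c) := by
  let : NormedAlgebra ℚ 𝔸 := NormedAlgebra.restrictScalars ℚ ℝ 𝔸
  have hG : ∀ s, HasDerivAt (fun s => exp ((-s) • c) * F s) 0 s := by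
    intro s
    have he : HasDerivAt (fun s : ℝ => exp ((-s) • c)) (-(c * exp ((-s) • c))) s := by
      simpa [Function.comp_def] using
        (hasDerivAt_exp_smul_const' c (-s)).scomp s (hasDerivAt_neg s)
    refine (he.mul (hF s)).congr_deriv ?_
    rw [← mul_assoc, (((Commute.refl c).smul_left (-s)).exp_left).eq, neg_mul, neg_add_cancel]
  have hconst : exp ((-t) • c) * F t = 1 := by
    rw [is_const_of_deriv_eq_zero (fun s => (hG s).differentiableAt) (fun s => (hG s).deriv)
      t 0, hF₀, neg_zero, zero_smul, exp_zero, one_mul]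
  calc F t = exp (t • c + (-t) • c) * F t := by
        rw [← add_smul, add_neg_cancel, zero_smul, exp_zero, one_mul]
    _ = exp (t • c) := by
      rw [exp_add_of_commute (((Commute.refl c).smul_left t).smul_right (-t)), mul_assoc,
        hconst, mul_one]

end

/-- Special Baker–Campbell–Hausdorff formula: if `[a,b] = α • a` with `α ≠ 0`, then
`e^{τ(a+b)} = e^{τb} e^{((e^{τα}-1)/α) a}` in a Banach algebra. -/
theorem bch_special {𝔸 : Type*} [NormedRing 𝔸] [NormedAlgebra ℝ 𝔸] [CompleteSpace 𝔸]
    (a b : 𝔸) (α : ℝ) (hα : α ≠ 0) (h : a * b - b * a = α • a) (τ : ℝ) :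
    NormedSpace.exp (τ • (a + b)) =
      NormedSpace.exp (τ • b) *
        NormedSpace.exp (((Real.exp (τ * α) - 1) / α) • a) := by
  have hF := fun t => hasDerivAt_exp_smul_mul_exp_smul_of_commutator_eq_smul h
    (Real.hasDerivAt_exp_mul_sub_one_div hα t)
  exact (eq_exp_smul_of_hasDerivAt (by simp) hF τ).symm
end

section
/- Let 𝔸 be a complete normed real algebra (a Banach algebra), let a, b ∈ 𝔸, and let α ∈ ℝ satisfy the commutation relation a * b - b * a = α • a. Then for every τ ∈ ℝ, exp(τ • b) * a * exp(-τ • b) = Real.exp (-τ * α) • a. -/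
/-!
The relation says `a * b = (b + α) * a`, so `a` intertwines `s • b` with `s • b + s * α`, hence
`exp (s • b)` with `exp (s • b + s * α) = e^{s α} • exp (s • b)`; take `s = -τ` and cancel
`exp (τ • b) * exp (-τ • b) = 1`.
-/

open NormedSpace

theorem semiconjBy_add_algebraMap_of_mul_sub_mul_eq_smul {R A : Type*} [CommRing R] [Ring A]
    [Algebra R A] {a b : A} {α : R} (h : a * b - b * a = α • a) :
    SemiconjBy a b (b + algebraMap R A α) := by
  rw [SemiconjBy, add_mul, ← Algebra.smul_def, ← h, add_sub_cancel]

theorem exp_add_algebraMap_real {𝔸 : Type*} [NormedRing 𝔸] [NormedAlgebra ℝ 𝔸] [CompleteSpace 𝔸]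
    (x : 𝔸) (c : ℝ) : exp (x + algebraMap ℝ 𝔸 c) = Real.exp c • exp x := by
  -- Mathlib states `exp_add_of_commute` for Banach algebras over `ℚ`.
  let +nondep : NormedAlgebra ℚ 𝔸 := .restrictScalars ℚ ℝ 𝔸
  rw [exp_add_of_commute (Algebra.commutes c x).symm, ← algebraMap_exp_comm,
    ← Real.exp_eq_exp_ℝ, ← Algebra.commutes, ← Algebra.smul_def]

/-- If `[a,b] = α • a` in a Banach algebra, then `e^{τb} a e^{-τb} = e^{-τα} • a`. -/
theorem exp_conj_of_commutator {𝔸 : Type*} [NormedRing 𝔸] [NormedAlgebra ℝ 𝔸]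
    [CompleteSpace 𝔸] (a b : 𝔸) (α : ℝ) (h : a * b - b * a = α • a) (τ : ℝ) :
    NormedSpace.exp (τ • b) * a * NormedSpace.exp ((-τ) • b) =
      Real.exp (-τ * α) • a := by
  let +nondep : NormedAlgebra ℚ 𝔸 := .restrictScalars ℚ ℝ 𝔸
  have hconj : SemiconjBy a ((-τ) • b) ((-τ) • b + algebraMap ℝ 𝔸 (-τ * α)) := by
    have := (semiconjBy_add_algebraMap_of_mul_sub_mul_eq_smul h).smul_right (-τ)
    rwa [smul_add, Algebra.smul_def (-τ) (algebraMap ℝ 𝔸 α), ← map_mul] at this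
  have hinv : exp (τ • b) * exp ((-τ) • b) = 1 := by
    rw [← exp_add_of_commute ((Commute.refl b).smul_left τ |>.smul_right (-τ)), ← add_smul,
      add_neg_cancel, zero_smul, exp_zero]
  calc exp (τ • b) * a * exp ((-τ) • b)
      = exp (τ • b) * (exp ((-τ) • b + algebraMap ℝ 𝔸 (-τ * α)) * a) := by
        rw [mul_assoc, hconj.exp_right.eq]
    _ = Real.exp (-τ * α) • a := by
        rw [exp_add_algebraMap_real, smul_mul_assoc, mul_smul_comm, ← mul_assoc, hinv, one_mul]
end
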